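/- Let R be a strongly ℤ-graded ring with grading 𝒜, and let a ≤ b be integers. Then the additive subgroup ⨆_{a ≤ n ≤ b} 𝒜 n of R, regarded as a left module over the subring 𝒜 0 via multiplication, is finitely generated and projective. -/

import Mathlib

/-- A ℤ-graded ring is *strongly graded* if `𝒜 i * 𝒜 j = 𝒜 (i + j)` for all `i j`. -/
def IsStronglyGraded {R : Type*} [Ring R] (𝒜 : ℤ → Submodule ℤ R) : Prop :=
  ∀ i j : ℤ, 𝒜 i * 𝒜 j = 𝒜 (i + j)

variable {R : Type*} [Ring R] (𝒜 : ℤ → Submodule ℤ R) [GradedRing 𝒜]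

theorem grade_zero_mul_Icc (a b : ℤ) :
    (𝒜 0) * (⨆ n ∈ Set.Icc a b, 𝒜 n) ≤ ⨆ n ∈ Set.Icc a b, 𝒜 n := by
  rw [Submodule.mul_iSup]
  refine iSup_le fun n => ?_
  rw [Submodule.mul_iSup]
  refine iSup_le fun hn => ?_
  refine le_trans (Submodule.mul_le.2 fun x hx y hy => by
    simpa using SetLike.mul_mem_graded hx hy) ?_
  exact le_iSup₂_of_le n hn le_rfl

/-- `⨆_{a ≤ n ≤ b} 𝒜 n` is a left module over the subring `𝒜 0`, the action
being multiplication in `R`. -/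
instance IccGradeZeroModule (a b : ℤ) : Module (𝒜 0) ↥(⨆ n ∈ Set.Icc a b, 𝒜 n) where
  smul c x := ⟨(c : R) * x, grade_zero_mul_Icc 𝒜 a b (Submodule.mul_mem_mul c.2 x.2)⟩
  one_smul x := Subtype.ext (one_mul _)
  mul_smul a b x := Subtype.ext (mul_assoc _ _ _)
  smul_zero a := Subtype.ext (mul_zero _)
  smul_add a x y := Subtype.ext (mul_add _ _ _)
  add_smul a b x := Subtype.ext (add_mul _ _ _)
  zero_smul x := Subtype.ext (zero_mul _)

/-! Strong grading gives `1 ∈ 𝒜 (-n) * 𝒜 n`, say `1 = ∑ᵢ yₙᵢ xₙᵢ` with `yₙᵢ ∈ 𝒜 (-n)` and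
`xₙᵢ ∈ 𝒜 n`. For `m ∈ M = ⨆_{a ≤ n ≤ b} 𝒜 n` the degree-zero part of `m yₙᵢ` is `mₙ yₙᵢ`, hence
`∑ₙ ∑ᵢ (m yₙᵢ)₀ xₙᵢ = ∑ₙ mₙ = m`. So the `𝒜 0`-linear forms `m ↦ (m yₙᵢ)₀` and the elements `xₙᵢ`
form a finite dual basis of `M`, which exhibits `M` as a direct summand of a finite free
`𝒜 0`-module. -/

open DirectSum

theorem Submodule.exists_fin_sum_mul_eq_of_mem_mul {S A : Type*} [Semiring S] [Semiring A]
    [Module S A] [IsScalarTower S A A] {P Q : Submodule S A} {r : A} (hr : r ∈ P * Q) :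
    ∃ (k : ℕ) (y x : Fin k → A), (∀ i, y i ∈ P) ∧ (∀ i, x i ∈ Q) ∧ ∑ i, y i * x i = r := by
  refine Submodule.mul_induction_on hr (fun y hy x hx => ⟨1, fun _ => y, fun _ => x, ?_⟩) ?_
  · simp [hy, hx]
  · rintro r s ⟨k, y, x, hy, hx, rfl⟩ ⟨l, y', x', hy', hx', rfl⟩
    refine ⟨k + l, Fin.append y y', Fin.append x x', ?_, ?_, ?_⟩
    · exact Fin.addCases (by simpa using hy) (by simpa using hy')
    · exact Fin.addCases (by simpa using hx) (by simpa using hx')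
    · simp [Fin.sum_univ_add]

theorem Module.finite_projective_of_sum_smul_eq {A M ι : Type*} [Ring A] [AddCommGroup M]
    [Module A M] [Fintype ι] (φ : ι → M →ₗ[A] A) (x : ι → M) (h : ∀ m, ∑ i, φ i m • x i = m) :
    Module.Finite A M ∧ Module.Projective A M := by
  let g := Fintype.linearCombination A x
  let f := LinearMap.pi φ
  have hgf : g ∘ₗ f = LinearMap.id := LinearMap.ext h
  exact ⟨.of_surjective g fun m => ⟨f m, h m⟩, .of_split f g hgf⟩

theorem DirectSum.sum_decompose_eq_of_mem_iSup {ι S M : Type*} [DecidableEq ι] [Semiring S]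
    [AddCommMonoid M] [Module S M] (ℳ : ι → Submodule S M) [Decomposition ℳ]
    {s : Set ι} [Fintype s] {r : M} (hr : r ∈ ⨆ i ∈ s, ℳ i) :
    ∑ i : s, (decompose ℳ r i : M) = r := by
  rw [iSup_subtype'] at hr
  induction hr using Submodule.iSup_induction' with
  | mem j r hr =>
    rw [Fintype.sum_eq_single j fun i hij =>
      decompose_of_mem_ne ℳ hr (Subtype.coe_ne_coe.2 hij.symm), decompose_of_mem_same ℳ hr]
  | zero => simp
  | add r r' _ _ hr hr' => simp [Finset.sum_add_distrib, hr, hr']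

theorem DirectSum.coe_decompose_mul_zero_of_mem_neg {ι A σ : Type*} [DecidableEq ι] [AddGroup ι]
    [Semiring A] [SetLike σ A] [AddSubmonoidClass σ A] (𝒜 : ι → σ) [GradedRing 𝒜]
    {n : ι} {r y : A} (hy : y ∈ 𝒜 (-n)) : (decompose 𝒜 (r * y) 0 : A) = decompose 𝒜 r n * y := by
  rw [← coe_decompose_mul_add_of_right_mem 𝒜 hy, add_neg_cancel]

theorem DirectSum.sum_coe_decompose_mul_zero_mul_eq_of_mem_iSup {ι S A : Type*} [DecidableEq ι]
    [AddGroup ι] [Semiring S] [Semiring A] [Module S A] (𝒜 : ι → Submodule S A) [GradedRing 𝒜]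
    {s : Set ι} [Fintype s] {k : ι → ℕ} {y x : ∀ n, Fin (k n) → A}
    (hy : ∀ n ∈ s, ∀ i, y n i ∈ 𝒜 (-n))
    (hyx : ∀ n ∈ s, ∑ i, y n i * x n i = 1) {r : A} (hr : r ∈ ⨆ n ∈ s, 𝒜 n) :
    ∑ n : s, ∑ i, (decompose 𝒜 (r * y n i) 0 : A) * x n i = r := calc
  _ = ∑ n : s, (decompose 𝒜 r n : A) * ∑ i, y n i * x n i := by
    refine Finset.sum_congr rfl fun n _ => ?_
    rw [Finset.mul_sum]
    refine Finset.sum_congr rfl fun i _ => ?_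
    rw [coe_decompose_mul_zero_of_mem_neg 𝒜 (hy n n.2 i), mul_assoc]
  _ = r := by
    simp only [hyx _ (Subtype.prop _), mul_one]
    exact sum_decompose_eq_of_mem_iSup 𝒜 hr

section Icc

variable (a b : ℤ)

theorem coe_smul_Icc (c : 𝒜 0) (m : ↥(⨆ n ∈ Set.Icc a b, 𝒜 n)) :
    ((c • m : ↥(⨆ n ∈ Set.Icc a b, 𝒜 n)) : R) = c * m :=
  rfl

@[simps]
def projZeroMulRight (y : R) : ↥(⨆ n ∈ Set.Icc a b, 𝒜 n) →ₗ[𝒜 0] 𝒜 0 where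
  toFun m := decompose 𝒜 ((m : R) * y) 0
  map_add' m m' := by simp [add_mul]
  map_smul' c m := Subtype.ext <| by
    dsimp only
    rw [coe_smul_Icc, mul_assoc]
    exact coe_decompose_mul_of_left_mem_zero 𝒜 c.2

end Icc

theorem Icc_finite_projective (h : IsStronglyGraded 𝒜) (a b : ℤ) :
    Module.Finite (𝒜 0) ↥(⨆ n ∈ Set.Icc a b, 𝒜 n) ∧
    Module.Projective (𝒜 0) ↥(⨆ n ∈ Set.Icc a b, 𝒜 n) := by
  have one_mem (n : ℤ) : (1 : R) ∈ 𝒜 (-n) * 𝒜 n := by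
    rw [h, neg_add_cancel]
    exact SetLike.GradedOne.one_mem
  choose k y x hy hx hyx using fun n => Submodule.exists_fin_sum_mul_eq_of_mem_mul (one_mem n)
  have hxM (n : Set.Icc a b) (i : Fin (k n)) : x n i ∈ ⨆ n ∈ Set.Icc a b, 𝒜 n :=
    Submodule.mem_iSup_of_mem (n : ℤ) (Submodule.mem_iSup_of_mem n.2 (hx n i))
  refine Module.finite_projective_of_sum_smul_eq (ι := Σ n : Set.Icc a b, Fin (k n))
    (fun p => projZeroMulRight 𝒜 a b (y p.1 p.2)) (fun p => ⟨x p.1 p.2, hxM p.1 p.2⟩)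
    fun m => Subtype.ext ?_
  simp only [Submodule.coe_sum, coe_smul_Icc, Fintype.sum_sigma, projZeroMulRight_apply]
  exact sum_coe_decompose_mul_zero_mul_eq_of_mem_iSup 𝒜 (fun n _ => hy n) (fun n _ => hyx n) m.2
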